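/- arXiv:2503.23832 — 3 statements merged into one kernel-verified Lean document; each statement's English description precedes it below -/
import Mathlib

section
/- Let X ∈ ℝ^{m×n} be nonnegative with Z̄ satisfying max(0, Z̄) = X, and let Θ̄ be any matrix. Then ‖X − Z̄ + min(0, Θ̄)‖_F² ≤ ‖Z̄ − Θ̄‖_F². -/
open Finset

/-- `max 0 z - z = -min 0 z`, so the left side is `(min 0 t - min 0 z) ^ 2`, and `min 0 ·` is
1-Lipschitz. -/
theorem sq_max_zero_sub_add_min_zero_le {α : Type*} [CommRing α] [LinearOrder α]
    [IsStrictOrderedRing α] (z t : α) : (max 0 z - z + min 0 t) ^ 2 ≤ (z - t) ^ 2 := by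
  have hneg_part : max 0 z - z = -min 0 z := by
    linear_combination min_add_max (0 : α) z
  have hlip : |min 0 t - min 0 z| ≤ |z - t| := by
    simpa [abs_sub_comm t z] using abs_min_sub_min_le_max (0 : α) t 0 z
  rw [hneg_part, neg_add_eq_sub]
  exact sq_le_sq.2 hlip

theorem latent_min_bound_general {m n : ℕ} (X Z Θ : Matrix (Fin m) (Fin n) ℝ)
    (hZ : ∀ i j, max 0 (Z i j) = X i j) :
    ∑ i, ∑ j, (X i j - Z i j + min 0 (Θ i j))^2 ≤ ∑ i, ∑ j, (Z i j - Θ i j)^2 :=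
  sum_le_sum fun i _ => sum_le_sum fun j _ =>
    hZ i j ▸ sq_max_zero_sub_add_min_zero_le (Z i j) (Θ i j)

theorem latent_min_bound {m n : ℕ} (X Z Θ : Matrix (Fin m) (Fin n) ℝ)
    (hX : ∀ i j, 0 ≤ X i j)
    (hZ : ∀ i j, max 0 (Z i j) = X i j) :
    ∑ i, ∑ j, (X i j - Z i j + min 0 (Θ i j))^2 ≤ ∑ i, ∑ j, (Z i j - Θ i j)^2 :=
  latent_min_bound_general X Z Θ hZ
end

section
/- Fix 0 < ε < 1/√2 and define ℓ(b) = (2 + b² + ε² − √((b² − ε²)² + 4(b + ε)²))/2 for b < 0. Then lim_{b→−∞} ℓ(b) = ε², and ℓ(b) > ε² for every b < 0. Consequently the infimum of ℓ over (−∞, 0) equals ε² and is not attained. -/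
open Filter

theorem ill_posed_latent (ε : ℝ) (hε0 : 0 < ε) (hε1 : ε < 1 / Real.sqrt 2)
    (ℓ : ℝ → ℝ)
    (hℓ : ∀ b, ℓ b = (2 + b^2 + ε^2 - Real.sqrt ((b^2 - ε^2)^2 + 4*(b + ε)^2)) / 2) :
    Tendsto ℓ atBot (nhds (ε^2)) ∧
    (∀ b < 0, ε^2 < ℓ b) ∧
    IsGLB (ℓ '' Set.Iio 0) (ε^2) ∧
    ε^2 ∉ ℓ '' Set.Iio 0 := by
  have h2 : Real.sqrt 2 ^ 2 = 2 := Real.sq_sqrt (by norm_num)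
  have hs2pos : 0 < Real.sqrt 2 := Real.sqrt_pos.mpr (by norm_num)
  have hε2 : ε ^ 2 < 1 / 2 := by
    have h : ε * Real.sqrt 2 < 1 := by
      have := (lt_div_iff₀ hs2pos).mp hε1
      linarith
    nlinarith [mul_pos hε0 hs2pos]
  have key : ∀ b : ℝ, ℓ b = ε^2 + 2*(1 - 2*ε^2 - 2*b*ε) /
      (2 + b^2 - ε^2 + Real.sqrt ((b^2 - ε^2)^2 + 4*(b + ε)^2)) := by
    intro b
    have hD : (0:ℝ) ≤ (b^2 - ε^2)^2 + 4*(b + ε)^2 := by positivity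
    set s := Real.sqrt ((b^2 - ε^2)^2 + 4*(b + ε)^2) with hsdef
    have hs0 : 0 ≤ s := Real.sqrt_nonneg _
    have hs2 : s^2 = (b^2 - ε^2)^2 + 4*(b + ε)^2 := Real.sq_sqrt hD
    have hden : 0 < 2 + b^2 - ε^2 + s := by nlinarith [sq_nonneg b]
    rw [hℓ b]
    field_simp
    linear_combination -hs2
  have hpos : ∀ b < 0, ε^2 < ℓ b := by
    intro b hb
    rw [key b]
    have hden : 0 < 2 + b^2 - ε^2 + Real.sqrt ((b^2 - ε^2)^2 + 4*(b + ε)^2) := by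
      nlinarith [Real.sqrt_nonneg ((b^2 - ε^2)^2 + 4*(b + ε)^2), sq_nonneg b]
    have hnum : 0 < 2*(1 - 2*ε^2 - 2*b*ε) := by nlinarith [mul_pos hε0 (neg_pos.mpr hb)]
    have := div_pos hnum hden
    linarith
  have htend : Tendsto ℓ atBot (nhds (ε^2)) := by
    have h1 : Tendsto (fun b:ℝ => b⁻¹) atBot (nhds 0) := by
      have := (tendsto_neg_atBot_atTop (G := ℝ)).inv_tendsto_atTop.neg
      simpa [Function.comp, inv_neg] using this
    have hg : Tendsto (fun b:ℝ => ε^2 + 2*b⁻¹^2 - 4*ε*b⁻¹) atBot (nhds (ε^2)) := by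
      have h' : Tendsto (fun b:ℝ => ε^2 + 2*b⁻¹^2 - 4*ε*b⁻¹) atBot
          (nhds (ε^2 + 2*(0:ℝ)^2 - 4*ε*0)) :=
        ((tendsto_const_nhds (x := ε^2)).add ((h1.pow 2).const_mul 2)).sub (h1.const_mul (4*ε))
      simpa using h'
    refine tendsto_of_tendsto_of_tendsto_of_le_of_le' tendsto_const_nhds hg ?_ ?_
    · filter_upwards [eventually_lt_atBot (0:ℝ)] with b hb
      exact (hpos b hb).le
    · filter_upwards [eventually_lt_atBot (0:ℝ)] with b hb
      rw [key b]
      have hb2 : 0 < b^2 := by nlinarith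
      have hs0 : 0 ≤ Real.sqrt ((b^2 - ε^2)^2 + 4*(b + ε)^2) := Real.sqrt_nonneg _
      have hAs : b^2 ≤ 2 + b^2 - ε^2 + Real.sqrt ((b^2 - ε^2)^2 + 4*(b + ε)^2) := by
        nlinarith
      have hnum : 2*(1 - 2*ε^2 - 2*b*ε) ≤ 2 - 4*ε*b := by nlinarith
      have hc : (0:ℝ) ≤ 2 - 4*ε*b := by nlinarith [mul_pos hε0 (neg_pos.mpr hb)]
      have hd1 : 2*(1 - 2*ε^2 - 2*b*ε) /
          (2 + b^2 - ε^2 + Real.sqrt ((b^2 - ε^2)^2 + 4*(b + ε)^2)) ≤ (2 - 4*ε*b) / b^2 :=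
        div_le_div₀ hc hnum hb2 hAs
      have hbne : b ≠ 0 := ne_of_lt hb
      have heq : (2 - 4*ε*b) / b^2 = 2*b⁻¹^2 - 4*ε*b⁻¹ := by
        field_simp
      linarith [hd1, heq ▸ hd1]
  refine ⟨htend, hpos, ⟨?_, ?_⟩, ?_⟩
  · rintro x ⟨b, hb, rfl⟩
    exact (hpos b hb).le
  · intro c hc
    refine ge_of_tendsto htend ?_
    filter_upwards [eventually_lt_atBot (0:ℝ)] with b hb
    exact hc ⟨b, hb, rfl⟩
  · rintro ⟨b, hb, hbe⟩
    exact absurd hbe (ne_of_gt (hpos b hb))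
end

section
/- Let 0 < ε < 1/√2 and X = [[1, 0],[ε, 1]]. If Θ ∈ ℝ^{2×2} has rank at most 1 and all entries of Θ are nonnegative, then ‖X − max(0, Θ)‖_F² ≥ (2 + ε² − ε√(ε² + 4))/2 > ε². -/
/-!
Since `Θ` has rank at most one, both of its rows are multiples of one vector `u`, which we may
take to be its first row when that row is nonzero (otherwise already the first row of `X`
contributes `1`). The squared distance from a vector `x` to a multiple of `u` is at least
`(x × u)² / ‖u‖²`, so `‖X - Θ‖_F² ‖u‖² ≥ ‖X w‖²` with `w = u` rotated by a right angle; and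
`‖X w‖² ≥ σ₂(X)² ‖w‖²`, the squared smallest singular value `σ₂(X)²` being the smaller root of
`s² - (2 + ε²) s + 1 = 0`.
-/

open Finset Matrix

noncomputable def sigmaMinSq (ε : ℝ) : ℝ := (2 + ε ^ 2 - ε * √(ε ^ 2 + 4)) / 2

lemma one_sub_sigmaMinSq_mul (ε : ℝ) :
    (1 - sigmaMinSq ε) * (1 + ε ^ 2 - sigmaMinSq ε) = ε ^ 2 := by
  have ht : √(ε ^ 2 + 4) ^ 2 = ε ^ 2 + 4 := Real.sq_sqrt (by positivity)
  unfold sigmaMinSq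
  linear_combination ε ^ 2 / 4 * ht

lemma sigmaMinSq_lt_one {ε : ℝ} (hε : 0 < ε) : sigmaMinSq ε < 1 := by
  have ht : ε < √(ε ^ 2 + 4) := Real.lt_sqrt_of_sq_lt (by linarith)
  unfold sigmaMinSq
  nlinarith

lemma sq_lt_sigmaMinSq {ε : ℝ} (hε : ε ^ 2 < 1 / 2) : ε ^ 2 < sigmaMinSq ε := by
  have ht : √(ε ^ 2 + 4) ^ 2 = ε ^ 2 + 4 := Real.sq_sqrt (by positivity)
  have ht0 : 0 ≤ √(ε ^ 2 + 4) := Real.sqrt_nonneg _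
  unfold sigmaMinSq
  nlinarith [sq_nonneg (ε * √(ε ^ 2 + 4) + ε ^ 2 - 2)]

lemma sigmaMinSq_mul_le {ε : ℝ} (hε : 0 < ε) (p q : ℝ) :
    sigmaMinSq ε * (p ^ 2 + q ^ 2) ≤ p ^ 2 + (ε * p + q) ^ 2 := by
  have hs := sigmaMinSq_lt_one hε
  have hkey := one_sub_sigmaMinSq_mul ε
  -- `(1 - s)` times the difference is the perfect square `((1 - s) q + ε p)²`
  nlinarith [sq_nonneg ((1 - sigmaMinSq ε) * q + ε * p)]

lemma cross_sq_le_of_cross_eq_zero {x₁ x₂ y₁ y₂ u₁ u₂ : ℝ} (h : y₁ * u₂ - y₂ * u₁ = 0) :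
    (x₁ * u₂ - x₂ * u₁) ^ 2 ≤ ((x₁ - y₁) ^ 2 + (x₂ - y₂) ^ 2) * (u₁ ^ 2 + u₂ ^ 2) := by
  have hx : x₁ * u₂ - x₂ * u₁ = (x₁ - y₁) * u₂ - (x₂ - y₂) * u₁ := by linear_combination h
  rw [hx]
  nlinarith [sq_nonneg ((x₁ - y₁) * u₁ + (x₂ - y₂) * u₂)]

lemma sigmaMinSq_le_of_mul_sub_mul_eq_zero {ε a b c d : ℝ} (hε : 0 < ε)
    (hdet : a * d - b * c = 0) :
    sigmaMinSq ε ≤ (1 - a) ^ 2 + b ^ 2 + (ε - c) ^ 2 + (1 - d) ^ 2 := by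
  rcases (add_nonneg (sq_nonneg a) (sq_nonneg b)).eq_or_lt with hu | hu
  · have ha : a = 0 := by nlinarith [sq_nonneg b]
    have hs := sigmaMinSq_lt_one hε
    subst ha
    nlinarith [sq_nonneg b, sq_nonneg (ε - c), sq_nonneg (1 - d)]
  · have row₁ := cross_sq_le_of_cross_eq_zero (x₁ := 1) (x₂ := 0) (y₁ := a) (y₂ := b)
      (u₁ := a) (u₂ := b) (by ring)
    have row₂ := cross_sq_le_of_cross_eq_zero (x₁ := ε) (x₂ := 1) (y₁ := c) (y₂ := d)
      (u₁ := a) (u₂ := b) (by linear_combination -hdet)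
    refine le_of_mul_le_mul_right ?_ hu
    nlinarith [sigmaMinSq_mul_le hε b (-a)]

lemma det_eq_zero_of_rank_lt_card {m R : Type*} [Fintype m] [DecidableEq m] [CommRing R]
    [IsDomain R] {A : Matrix m m R} (h : A.rank < Fintype.card m) : A.det = 0 := by
  by_contra hA
  exact h.ne (rank_of_det_ne_zero hA)

theorem nonneg_rank_one_lower_bound (ε : ℝ) (hε0 : 0 < ε) (hε1 : ε < 1 / Real.sqrt 2)
    (Θ : Matrix (Fin 2) (Fin 2) ℝ) (hrank : Θ.rank ≤ 1) (hΘ : ∀ i j, 0 ≤ Θ i j) :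
    let X : Matrix (Fin 2) (Fin 2) ℝ := !![1, 0; ε, 1]
    (2 + ε^2 - ε * Real.sqrt (ε^2 + 4)) / 2 ≤ ∑ i, ∑ j, (X i j - max 0 (Θ i j))^2 ∧
    ε^2 < (2 + ε^2 - ε * Real.sqrt (ε^2 + 4)) / 2 := by
  intro X
  have hε : ε ^ 2 < 1 / 2 := by
    have := pow_lt_pow_left₀ hε1 hε0.le two_ne_zero
    rwa [div_pow, one_pow, Real.sq_sqrt zero_le_two] at this
  refine ⟨?_, sq_lt_sigmaMinSq hε⟩
  have hdet := det_eq_zero_of_rank_lt_card (hrank.trans_lt (by simp))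
  rw [det_fin_two] at hdet
  show sigmaMinSq ε ≤ _
  simpa [Fin.sum_univ_two, X, max_eq_right (hΘ _ _), add_assoc] using
    sigmaMinSq_le_of_mul_sub_mul_eq_zero hε0 hdet
end
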